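/- Let Λ > 0, let ρ̄ : (0,1] → ℝ be differentiable with ρ̄(1) > 0, let p̄ : (0,1] → ℝ satisfy 0 ≤ p̄(τ) ≤ ρ̄(τ)/3 for all τ ∈ (0,1], and suppose ρ̄ satisfies the background Euler equation ∂_τ ρ̄(τ) = (3/τ)(ρ̄(τ) + p̄(τ)) on (0,1]. Define ω²(τ) := (Λ + ρ̄(τ))/3 and Ω(τ) := −(ρ̄(τ) + p̄(τ))/2. Then for every τ ∈ (0,1]: (1/3)·ρ̄(1)·τ⁴ ≤ ω²(τ) − Λ/3 ≤ (1/3)·ρ̄(1)·τ³ and −(2/3)·τ³·ρ̄(1) ≤ Ω(τ) ≤ −(1/2)·τ⁴·ρ̄(1). -/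

import Mathlib

/-!
The Euler equation gives `τ ρ̄' = 3 (ρ̄ + p̄)`, and `0 ≤ p̄ ≤ ρ̄/3` squeezes this between `3 ρ̄` and
`4 ρ̄`. Hence `ρ̄/τ³` is nondecreasing and `ρ̄/τ⁴` nonincreasing on `(0,1]`, so comparing with
`τ = 1` gives `ρ̄(1) τ⁴ ≤ ρ̄(τ) ≤ ρ̄(1) τ³`; the bounds on `ω² - Λ/3 = ρ̄/3` and on `Ω` follow.
-/

open Set

theorem hasDerivAt_div_pow {f : ℝ → ℝ} {f' t : ℝ} (n : ℕ) (hf : HasDerivAt f f' t)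
    (ht : t ≠ 0) :
    HasDerivAt (fun s => f s / s ^ n) ((t * f' - n * f t) / t ^ (n + 1)) t := by
  refine (hf.div (hasDerivAt_pow n t) (pow_ne_zero n ht)).congr_deriv ?_
  rcases n with _ | n
  · simp [ht]
  · rw [Nat.add_sub_cancel]
    field_simp
    ring

section

variable {f f' : ℝ → ℝ} {s : Set ℝ} (n : ℕ)

theorem monotoneOn_div_pow_of_le_mul_deriv (hs : Convex ℝ s) (hpos : s ⊆ Ioi 0)
    (hf : ∀ t ∈ s, HasDerivAt f (f' t) t) (h : ∀ t ∈ s, n * f t ≤ t * f' t) :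
    MonotoneOn (fun t => f t / t ^ n) s := by
  have hderiv (t) (ht : t ∈ s) := hasDerivAt_div_pow n (hf t ht) (hpos ht).ne'
  refine monotoneOn_of_hasDerivWithinAt_nonneg hs
    (fun t ht => (hderiv t ht).continuousAt.continuousWithinAt)
    (fun t ht => (hderiv t (interior_subset ht)).hasDerivWithinAt) fun t ht => ?_
  have ht : t ∈ s := interior_subset ht
  exact div_nonneg (sub_nonneg.2 (h t ht)) (pow_nonneg (hpos ht).le _)

theorem antitoneOn_div_pow_of_mul_deriv_le (hs : Convex ℝ s) (hpos : s ⊆ Ioi 0)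
    (hf : ∀ t ∈ s, HasDerivAt f (f' t) t) (h : ∀ t ∈ s, t * f' t ≤ n * f t) :
    AntitoneOn (fun t => f t / t ^ n) s := by
  have hderiv (t) (ht : t ∈ s) := hasDerivAt_div_pow n (hf t ht) (hpos ht).ne'
  refine antitoneOn_of_hasDerivWithinAt_nonpos hs
    (fun t ht => (hderiv t ht).continuousAt.continuousWithinAt)
    (fun t ht => (hderiv t (interior_subset ht)).hasDerivWithinAt) fun t ht => ?_
  have ht : t ∈ s := interior_subset ht
  exact div_nonpos_of_nonpos_of_nonneg (sub_nonpos.2 (h t ht)) (pow_nonneg (hpos ht).le _)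

end

theorem background_omega_bounds_general (Λ : ℝ) (ρ p : ℝ → ℝ)
    (hp : ∀ τ ∈ Set.Ioc (0:ℝ) 1, 0 ≤ p τ ∧ p τ ≤ ρ τ / 3)
    (heuler : ∀ τ ∈ Set.Ioc (0:ℝ) 1, HasDerivAt ρ ((3 / τ) * (ρ τ + p τ)) τ) :
    ∀ τ ∈ Set.Ioc (0:ℝ) 1,
      ((1/3) * ρ 1 * τ ^ 4 ≤ (Λ + ρ τ) / 3 - Λ / 3 ∧
        (Λ + ρ τ) / 3 - Λ / 3 ≤ (1/3) * ρ 1 * τ ^ 3) ∧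
      (-((2/3) * τ ^ 3 * ρ 1) ≤ -((ρ τ + p τ) / 2) ∧
        -((ρ τ + p τ) / 2) ≤ -((1/2) * τ ^ 4 * ρ 1)) := by
  have hpos : Ioc (0:ℝ) 1 ⊆ Ioi 0 := Ioc_subset_Ioi_self
  have heuler_mul (t) (ht : t ∈ Ioc (0:ℝ) 1) : t * ((3 / t) * (ρ t + p t)) = 3 * (ρ t + p t) := by
    field_simp [ht.1.ne']
  have hmono := monotoneOn_div_pow_of_le_mul_deriv 3 (convex_Ioc 0 1) hpos heuler
    fun t ht => by rw [heuler_mul t ht]; push_cast; linarith [(hp t ht).1]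
  have hanti := antitoneOn_div_pow_of_mul_deriv_le 4 (convex_Ioc 0 1) hpos heuler
    fun t ht => by rw [heuler_mul t ht]; push_cast; linarith [(hp t ht).2]
  intro τ hτ
  have h1 : (1:ℝ) ∈ Ioc (0:ℝ) 1 := right_mem_Ioc.2 one_pos
  have hupper : ρ τ ≤ ρ 1 * τ ^ 3 := by
    simpa [div_le_iff₀ (pow_pos hτ.1 3)] using hmono hτ h1 hτ.2
  have hlower : ρ 1 * τ ^ 4 ≤ ρ τ := by
    simpa [le_div_iff₀ (pow_pos hτ.1 4)] using hanti hτ h1 hτ.2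
  obtain ⟨hp0, hp3⟩ := hp τ hτ
  exact ⟨⟨by linarith, by linarith⟩, ⟨by linarith, by linarith⟩⟩

/-- Bounds on `ω²(τ) - Λ/3` and on `Ω(τ)`, where `ω² = (Λ + ρ̄)/3` and
`Ω = -(ρ̄ + p̄)/2`, for `τ ∈ (0,1]`. -/
theorem background_omega_bounds (Λ : ℝ) (hΛ : 0 < Λ) (ρ p : ℝ → ℝ)
    (hρ1 : 0 < ρ 1)
    (hp : ∀ τ ∈ Set.Ioc (0:ℝ) 1, 0 ≤ p τ ∧ p τ ≤ ρ τ / 3)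
    (heuler : ∀ τ ∈ Set.Ioc (0:ℝ) 1, HasDerivAt ρ ((3 / τ) * (ρ τ + p τ)) τ) :
    ∀ τ ∈ Set.Ioc (0:ℝ) 1,
      ((1/3) * ρ 1 * τ ^ 4 ≤ (Λ + ρ τ) / 3 - Λ / 3 ∧
        (Λ + ρ τ) / 3 - Λ / 3 ≤ (1/3) * ρ 1 * τ ^ 3) ∧
      (-((2/3) * τ ^ 3 * ρ 1) ≤ -((ρ τ + p τ) / 2) ∧
        -((ρ τ + p τ) / 2) ≤ -((1/2) * τ ^ 4 * ρ 1)) :=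
  background_omega_bounds_general Λ ρ p hp heuler
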